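/- (Strengthened localized form of the main theorem.) Under the hypotheses of the main theorem (H continuous, H(x,·) rank-one level-convex, u ∈ C¹(Ω,ℝ^N) with H(·,Du) ≡ c ≥ 0), for every open Ω' ⋐ Ω, φ ∈ W^{1,∞}_0(Ω'), ξ ∈ ℝ^N, and every open ball B_ρ(x) ⋐ Ω' centered at a point x of local extremum of φ in Ω', one has ess sup_{Ω'} H(·, Du) ≤ ess sup_{B_ρ(x)} H(·, Du + ξ ⊗ Dφ). -/

import Mathlib

/-!
Let `a < c` and suppose `H(y, Du y + ξ ⊗ Dφ y) ≤ a` for a.e. `y` in the ball; replacing `(φ, ξ)`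
by `(-φ, -ξ)` we may assume that `x` is a local maximum of `φ`. By continuity of `H` and `Du`,
for a.e. `y` near `x` the gradient `Dφ y` lies in `S = {η | H(x, Du x + ξ ⊗ η) ≤ a'}` for some
`a < a' < c`. Rank-one level convexity makes `S` convex, and `H(x, Du x) = c` keeps it away
from `0`, so a separating functional yields a direction `v` with `∂ᵥφ ≥ u > 0` a.e. near `x`.
Mollifying the Lipschitz function `φ` shows that `φ` then strictly increases along `v`,
contradicting the maximum at `x`.
-/

open MeasureTheory

/-- A set of N×n real matrices is rank-one convex. -/
def RankOneConvex {N n : ℕ} (C : Set (Matrix (Fin N) (Fin n) ℝ)) : Prop :=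
  ∀ A ∈ C, ∀ B ∈ C, (A - B).rank ≤ 1 →
    ∀ l : ℝ, l ∈ Set.Icc (0:ℝ) 1 → l • A + (1 - l) • B ∈ C

/-- The N×n Jacobian (gradient) matrix of a map `u : ℝⁿ → ℝᴺ` at a point. -/
noncomputable def gradMat {n N : ℕ}
    (u : EuclideanSpace ℝ (Fin n) → EuclideanSpace ℝ (Fin N))
    (x : EuclideanSpace ℝ (Fin n)) : Matrix (Fin N) (Fin n) ℝ :=
  Matrix.of fun α i => fderiv ℝ u x (EuclideanSpace.single i 1) α

/-- The gradient (as a row vector) of a scalar function on ℝⁿ at a point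
(junk value where the function is not differentiable; defined a.e. by Rademacher). -/
noncomputable def gradVec {n : ℕ} (g : EuclideanSpace ℝ (Fin n) → ℝ)
    (x : EuclideanSpace ℝ (Fin n)) : Fin n → ℝ :=
  fun i => fderiv ℝ g x (EuclideanSpace.single i 1)

open Filter Topology Metric

section WeightedIntegral

variable {α : Type*} [MeasurableSpace α] {μ : Measure α} {F g : α → ℝ} {C : ℝ}

theorem integral_mul_le_mul_integral_of_ae_le (hg : 0 ≤ g) (hgi : Integrable g μ)
    (hFg : Integrable (fun y => F y * g y) μ) (h : ∀ᵐ y ∂μ, g y ≠ 0 → F y ≤ C) :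
    ∫ y, F y * g y ∂μ ≤ C * ∫ y, g y ∂μ := by
  rw [← integral_const_mul]
  refine integral_mono_ae hFg (hgi.const_mul C) (h.mono fun y hy => ?_)
  rcases eq_or_ne (g y) 0 with h0 | h0
  · simp [h0]
  · exact mul_le_mul_of_nonneg_right (hy h0) (hg y)

theorem mul_integral_le_integral_mul_of_ae_le (hg : 0 ≤ g) (hgi : Integrable g μ)
    (hFg : Integrable (fun y => F y * g y) μ) (h : ∀ᵐ y ∂μ, g y ≠ 0 → C ≤ F y) :
    C * ∫ y, g y ∂μ ≤ ∫ y, F y * g y ∂μ := by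
  rw [← integral_const_mul]
  refine integral_mono_ae (hgi.const_mul C) hFg (h.mono fun y hy => ?_)
  rcases eq_or_ne (g y) 0 with h0 | h0
  · simp [h0]
  · exact mul_le_mul_of_nonneg_right (hy h0) (hg y)

end WeightedIntegral

namespace LipschitzWith

variable {E : Type*} [NormedAddCommGroup E] [NormedSpace ℝ E] [MeasurableSpace E] [BorelSpace E]
  {μ : Measure E} {f : E → ℝ} {K : NNReal} {g : E → ℝ}

theorem integrable_fderiv_add_apply_mul (hf : LipschitzWith K f) (hgi : Integrable g μ)
    (a v : E) : Integrable (fun y => fderiv ℝ f (y + a) v * g y) μ := by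
  refine hgi.bdd_mul (c := K * ‖v‖)
    ((measurable_fderiv_apply_const ℝ f v).comp (measurable_add_const a)).aestronglyMeasurable
    (ae_of_all _ fun y => ?_)
  exact ((fderiv ℝ f (y + a)).le_opNorm v).trans
    (mul_le_mul_of_nonneg_right (norm_fderiv_le_of_lipschitz ℝ hf) (norm_nonneg v))

/-- Rademacher's theorem makes the difference quotients converge a.e., and the Lipschitz
bound dominates them. -/
theorem hasDerivAt_integral_comp_add_smul_mul [FiniteDimensional ℝ E] [μ.IsAddHaarMeasure]
    (hf : LipschitzWith K f) (hg : Continuous g) (hgc : HasCompactSupport g) (v : E) (t : ℝ) :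
    HasDerivAt (fun s => ∫ y, f (y + s • v) * g y ∂μ)
      (∫ y, fderiv ℝ f (y + t • v) v * g y ∂μ) t := by
  have hcont : ∀ s : ℝ, Continuous fun y => f (y + s • v) * g y := fun s =>
    (hf.continuous.comp (continuous_add_const _)).mul hg
  have hdiff : ∀ᵐ y ∂μ, DifferentiableAt ℝ f (y + t • v) :=
    (measurePreserving_add_right μ (t • v)).quasiMeasurePreserving.ae hf.ae_differentiableAt
  refine (hasDerivAt_integral_of_dominated_loc_of_lip (bound := fun y => K * ‖v‖ * |g y|)
    univ_mem (Eventually.of_forall fun s => (hcont s).aestronglyMeasurable)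
    ((hcont t).integrable_of_hasCompactSupport hgc.mul_left) ?_ ?_
    ((hg.integrable_of_hasCompactSupport hgc).abs.const_mul _) ?_).2
  · exact ((measurable_fderiv_apply_const ℝ f v).comp (measurable_add_const _)).mul
      hg.measurable |>.aestronglyMeasurable
  · refine ae_of_all _ fun y => (LipschitzWith.of_dist_le_mul fun s s' => ?_).lipschitzOnWith
    have hline : dist (f (y + s • v)) (f (y + s' • v)) ≤ K * (‖v‖ * dist s s') := by
      refine (hf.dist_le_mul _ _).trans_eq ?_
      rw [dist_add_left, dist_eq_norm, ← sub_smul, norm_smul, Real.dist_eq, Real.norm_eq_abs,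
        mul_comm ‖v‖]
    rw [Real.coe_nnabs, abs_of_nonneg (by positivity), Real.dist_eq, ← sub_mul, abs_mul,
      ← Real.dist_eq]
    calc dist (f (y + s • v)) (f (y + s' • v)) * |g y| ≤ K * (‖v‖ * dist s s') * |g y| := by
          gcongr
      _ = K * ‖v‖ * |g y| * dist s s' := by ring
  · filter_upwards [hdiff] with y hy
    have hline : HasDerivAt (fun s : ℝ => y + s • v) v t := by
      simpa using ((hasDerivAt_id t).smul_const v).const_add y
    exact (hy.hasFDerivAt.comp_hasDerivAt t hline).mul_const _

/-- Mollify `f` with a bump of radius `r`: the mollification has derivative at least `C` along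
the segment, and differs from `f` by at most `K r` at its endpoints. -/
theorem mul_le_sub_add_of_ae_le_fderiv [FiniteDimensional ℝ E] [μ.IsAddHaarMeasure]
    (hf : LipschitzWith K f) {x v : E} {δ C T r : ℝ} (hT : 0 ≤ T) (hr : 0 < r)
    (hrδ : r + T * ‖v‖ < δ) (h : ∀ᵐ y ∂μ, y ∈ ball x δ → C ≤ fderiv ℝ f y v) :
    C * T ≤ f (x + T • v) - f x + 2 * K * r := by
  obtain ⟨g, hgr⟩ : ∃ g : ContDiffBump x, g.rOut = r :=
    ⟨⟨r / 2, r, half_pos hr, half_lt_self hr⟩, rfl⟩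
  have hgi : Integrable g μ := g.integrable
  have hsupp : ∀ y, g y ≠ 0 → dist y x < r := fun y hy => by
    simpa [g.support_eq, hgr] using Function.mem_support.2 hy
  set J := fun s : ℝ => ∫ y, f (y + s • v) * g y ∂μ
  have hJ : ∀ s, HasDerivAt J (∫ y, fderiv ℝ f (y + s • v) v * g y ∂μ) s := fun s =>
    hf.hasDerivAt_integral_comp_add_smul_mul g.continuous g.hasCompactSupport v s
  have hJi : ∀ s : ℝ, Integrable (fun y => f (y + s • v) * g y) μ := fun s =>
    Continuous.integrable_of_hasCompactSupport
      ((hf.continuous.comp (continuous_add_const _)).mul g.continuous) g.hasCompactSupport.mul_left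
  have hderiv : ∀ s ∈ Set.Ioo 0 T, C * ∫ y, g y ∂μ ≤ deriv J s := by
    intro s hs
    rw [(hJ s).deriv]
    refine mul_integral_le_integral_mul_of_ae_le (fun _ => g.nonneg) hgi
      (hf.integrable_fderiv_add_apply_mul hgi _ v) ?_
    filter_upwards [(measurePreserving_add_right μ (s • v)).quasiMeasurePreserving.ae h]
      with y hy hgy
    refine hy (lt_of_le_of_lt (dist_triangle _ y _) ?_)
    rw [dist_self_add_left, norm_smul, Real.norm_of_nonneg hs.1.le]
    nlinarith [hsupp y hgy, hs.2, norm_nonneg v]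
  have hlower : C * (∫ y, g y ∂μ) * (T - 0) ≤ J T - J 0 :=
    (convex_Icc 0 T).mul_sub_le_image_sub_of_le_deriv
      (fun s _ => (hJ s).continuousAt.continuousWithinAt)
      (fun s _ => (hJ s).differentiableAt.differentiableWithinAt)
      (by rwa [interior_Icc]) 0 (Set.left_mem_Icc.2 hT) T (Set.right_mem_Icc.2 hT) hT
  have hupper : J T - J 0 ≤ (f (x + T • v) - f x + 2 * K * r) * ∫ y, g y ∂μ := by
    rw [← integral_sub (hJi T) (hJi 0)]
    simp only [← sub_mul, zero_smul, add_zero]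
    refine integral_mul_le_mul_integral_of_ae_le (fun _ => g.nonneg) hgi
      ((hJi T).sub (hJi 0) |>.congr (ae_of_all _ fun y => by simp [sub_mul]))
      (ae_of_all _ fun y hgy => ?_)
    have h₁ := hf.dist_le_mul (y + T • v) (x + T • v)
    have h₂ := hf.dist_le_mul y x
    rw [dist_add_right] at h₁
    rw [Real.dist_eq, abs_le] at h₁ h₂
    nlinarith [hsupp y hgy, K.coe_nonneg]
  nlinarith [g.integral_pos (μ := μ)]

theorem mul_le_sub_of_ae_le_fderiv [FiniteDimensional ℝ E] [μ.IsAddHaarMeasure]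
    (hf : LipschitzWith K f) {x v : E} {δ C T : ℝ} (hT : 0 ≤ T) (hTδ : T * ‖v‖ < δ)
    (h : ∀ᵐ y ∂μ, y ∈ ball x δ → C ≤ fderiv ℝ f y v) :
    C * T ≤ f (x + T • v) - f x := by
  have hlim : Tendsto (fun r => f (x + T • v) - f x + 2 * K * r) (𝓝[>] 0)
      (𝓝 (f (x + T • v) - f x)) :=
    (Continuous.tendsto' (by fun_prop) 0 _ (by simp)).mono_left nhdsWithin_le_nhds
  refine ge_of_tendsto hlim ?_
  filter_upwards [Ioo_mem_nhdsGT (sub_pos.2 hTδ)] with r hr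
  exact hf.mul_le_sub_add_of_ae_le_fderiv hT hr.1 (by linarith [hr.2]) h

theorem not_isLocalMax_of_ae_le_fderiv [FiniteDimensional ℝ E] [μ.IsAddHaarMeasure]
    (hf : LipschitzWith K f) {x v : E} {δ C : ℝ} (hδ : 0 < δ) (hC : 0 < C)
    (h : ∀ᵐ y ∂μ, y ∈ ball x δ → C ≤ fderiv ℝ f y v) : ¬IsLocalMax f x := by
  intro hmax
  have hline : Tendsto (fun T : ℝ => x + T • v) (𝓝[>] 0) (𝓝 x) :=
    (Continuous.tendsto' (f := fun T : ℝ => x + T • v) (by fun_prop) 0 x (by simp)).mono_left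
      nhdsWithin_le_nhds
  have hsmall : ∀ᶠ T : ℝ in 𝓝[>] 0, T * ‖v‖ < δ :=
    nhdsWithin_le_nhds <| (Continuous.tendsto' (f := fun T : ℝ => T * ‖v‖) (by fun_prop) 0 0
      (zero_mul _)).eventually (gt_mem_nhds hδ)
  obtain ⟨T, hTmax, hTδ, hT⟩ :=
    ((hline.eventually hmax).and (hsmall.and self_mem_nhdsWithin)).exists
  have := hf.mul_le_sub_of_ae_le_fderiv (μ := μ) (le_of_lt hT) hTδ h
  nlinarith [mul_pos hC (show (0 : ℝ) < T from hT)]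

end LipschitzWith

section Gradient

variable {n : ℕ} {φ ψ : EuclideanSpace ℝ (Fin n) → ℝ} {y : EuclideanSpace ℝ (Fin n)}

theorem Filter.EventuallyEq.gradVec_eq (h : φ =ᶠ[𝓝 y] ψ) : gradVec φ y = gradVec ψ y := by
  funext i
  simp only [gradVec, h.fderiv_eq]

theorem gradVec_neg : gradVec (-φ) y = -gradVec φ y := by
  funext i
  simp [gradVec, fderiv_neg]

theorem LipschitzWith.norm_gradVec_le {L : NNReal} (hφ : LipschitzWith L φ) (y) :
    ‖gradVec φ y‖ ≤ L := by
  refine (pi_norm_le_iff_of_nonneg L.coe_nonneg).2 fun i => ((fderiv ℝ φ y).le_opNorm _).trans ?_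
  rw [PiLp.norm_single, norm_one, mul_one]
  exact norm_fderiv_le_of_lipschitz ℝ hφ

theorem exists_fderiv_apply_eq_gradVec (f : (Fin n → ℝ) →L[ℝ] ℝ) :
    ∃ v : EuclideanSpace ℝ (Fin n), ∀ (φ : EuclideanSpace ℝ (Fin n) → ℝ) y,
      fderiv ℝ φ y v = f (gradVec φ y) := by
  classical
  refine ⟨∑ i, f (Pi.single i 1) • EuclideanSpace.single i 1, fun φ y => ?_⟩
  conv_rhs => rw [pi_eq_sum_univ' (gradVec φ y)]
  simp [map_sum, map_smul, gradVec, mul_comm]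

end Gradient

theorem RankOneConvex.convex_add_vecMulVec {N n : ℕ} {C : Set (Matrix (Fin N) (Fin n) ℝ)}
    (hC : RankOneConvex C) (P : Matrix (Fin N) (Fin n) ℝ) (w : Fin N → ℝ) :
    Convex ℝ {η : Fin n → ℝ | P + Matrix.vecMulVec w η ∈ C} := by
  intro η₁ h₁ η₂ h₂ a b ha hb hab
  obtain rfl : b = 1 - a := by linarith
  have hrank : (P + Matrix.vecMulVec w η₁ - (P + Matrix.vecMulVec w η₂)).rank ≤ 1 := by
    rw [add_sub_add_left_eq_sub, ← Matrix.vecMulVec_sub]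
    exact Matrix.rank_vecMulVec_le _ _
  show P + Matrix.vecMulVec w (a • η₁ + (1 - a) • η₂) ∈ C
  convert hC _ h₁ _ h₂ hrank a ⟨ha, by linarith⟩ using 1
  rw [Matrix.vecMulVec_add, Matrix.vecMulVec_smul, Matrix.vecMulVec_smul]
  module

theorem eventually_forall_lt_add_of_continuousAt {X Y : Type*} [TopologicalSpace X]
    [TopologicalSpace Y] {G : X × Y → ℝ} {x : X} {K : Set Y} (hK : IsCompact K)
    (hG : ∀ η ∈ K, ContinuousAt G (x, η)) {ε : ℝ} (hε : 0 < ε) :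
    ∀ᶠ y in 𝓝 x, ∀ η ∈ K, G (x, η) < G (y, η) + ε := by
  refine hK.eventually_forall_of_forall_eventually fun η hη => ?_
  have hfiber : ContinuousAt (fun z : X × Y => G (x, z.2)) (x, η) :=
    ContinuousAt.comp (f := fun z : X × Y => (x, z.2)) (hG η hη)
      (continuous_const.prodMk continuous_snd).continuousAt
  filter_upwards [(hG η hη).eventually (lt_mem_nhds (sub_lt_self _ (half_pos hε))),
    hfiber.eventually (gt_mem_nhds (lt_add_of_pos_right _ (half_pos hε)))] with z h₁ h₂
  linarith

theorem not_ae_le_of_isLocalMax_of_quasiconvexOn {n : ℕ}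
    {G : EuclideanSpace ℝ (Fin n) × (Fin n → ℝ) → ℝ} {x : EuclideanSpace ℝ (Fin n)}
    {φ : EuclideanSpace ℝ (Fin n) → ℝ} {L : NNReal} {a ρ : ℝ}
    (hG : ∀ η, ContinuousAt G (x, η)) (hGx : QuasiconvexOn ℝ Set.univ fun η => G (x, η))
    (hφ : LipschitzWith L φ) (hmax : IsLocalMax φ x) (ha : a < G (x, 0)) (hρ : 0 < ρ) :
    ¬∀ᵐ y, y ∈ ball x ρ → G (y, gradVec φ y) ≤ a := by
  intro hae
  obtain ⟨a', haa', ha'⟩ := exists_between ha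
  obtain ⟨δ, hδ, hnear⟩ := Metric.eventually_nhds_iff_ball.1 <|
    eventually_forall_lt_add_of_continuousAt (isCompact_closedBall 0 L) (fun η _ => hG η)
      (sub_pos.2 haa')
  obtain ⟨κ, hκ, hfar⟩ := Metric.eventually_nhds_iff_ball.1 <|
    ((hG 0).comp (Continuous.prodMk_right x).continuousAt).eventually (lt_mem_nhds ha')
  have hdisj : Disjoint (ball 0 κ) {η | η ∈ Set.univ ∧ G (x, η) ≤ a'} :=
    Set.disjoint_left.2 fun η hη hS => (hfar η hη).not_ge hS.2
  obtain ⟨f, u, hf_ball, hf_S⟩ :=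
    geometric_hahn_banach_open (convex_ball 0 κ) isOpen_ball (hGx a') hdisj
  have hu : 0 < u := by simpa using hf_ball 0 (mem_ball_self hκ)
  obtain ⟨v, hv⟩ := exists_fderiv_apply_eq_gradVec f
  refine hφ.not_isLocalMax_of_ae_le_fderiv (μ := volume) (v := v) (lt_min hδ hρ) hu ?_ hmax
  filter_upwards [hae] with y hy hyB
  rw [hv]
  refine hf_S _ ⟨trivial, ?_⟩
  have h₁ := hnear y (ball_subset_ball (min_le_left _ _) hyB) (gradVec φ y)
    (by simpa using hφ.norm_gradVec_le y)
  have h₂ := hy (ball_subset_ball (min_le_right _ _) hyB)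
  linarith

section Hamiltonian

variable {n N : ℕ} {H : EuclideanSpace ℝ (Fin n) → Matrix (Fin N) (Fin n) ℝ → ℝ}
  {D : EuclideanSpace ℝ (Fin n) → Matrix (Fin N) (Fin n) ℝ} {w : Fin N → ℝ}
  {x : EuclideanSpace ℝ (Fin n)}

theorem continuousAt_add_vecMulVec {η : Fin n → ℝ}
    (hH : ContinuousAt (fun q : EuclideanSpace ℝ (Fin n) × Matrix (Fin N) (Fin n) ℝ => H q.1 q.2)
      (x, D x + Matrix.vecMulVec w η))
    (hD : ContinuousAt D x) :
    ContinuousAt (fun q : EuclideanSpace ℝ (Fin n) × (Fin n → ℝ) =>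
      H q.1 (D q.1 + Matrix.vecMulVec w q.2)) (x, η) := by
  have hD' : ContinuousAt (fun q : EuclideanSpace ℝ (Fin n) × (Fin n → ℝ) => D q.1) (x, η) :=
    hD.comp continuousAt_fst
  exact ContinuousAt.comp (g := fun q : _ × Matrix (Fin N) (Fin n) ℝ => H q.1 q.2)
    (f := fun q : EuclideanSpace ℝ (Fin n) × (Fin n → ℝ) => (q.1, D q.1 + Matrix.vecMulVec w q.2))
    hH (continuousAt_fst.prodMk (hD'.add
      (continuous_const.matrix_vecMulVec continuous_snd).continuousAt))

theorem not_ae_le_of_isLocalMax_of_rankOneConvex {φ : EuclideanSpace ℝ (Fin n) → ℝ}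
    {L : NNReal} {a ρ : ℝ}
    (hH : ∀ P, ContinuousAt (fun q : EuclideanSpace ℝ (Fin n) × Matrix (Fin N) (Fin n) ℝ =>
      H q.1 q.2) (x, P))
    (hD : ContinuousAt D x) (hHx : ∀ t, RankOneConvex {P | H x P ≤ t})
    (hφ : LipschitzWith L φ) (hmax : IsLocalMax φ x) (ha : a < H x (D x)) (hρ : 0 < ρ) :
    ¬∀ᵐ y, y ∈ ball x ρ → H y (D y + Matrix.vecMulVec w (gradVec φ y)) ≤ a := by
  have hw0 : Matrix.vecMulVec w (0 : Fin n → ℝ) = 0 := by ext; simp [Matrix.vecMulVec_apply]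
  exact not_ae_le_of_isLocalMax_of_quasiconvexOn
    (G := fun q => H q.1 (D q.1 + Matrix.vecMulVec w q.2))
    (fun _ => continuousAt_add_vecMulVec (hH _) hD)
    (fun t => by simpa using (hHx t).convex_add_vecMulVec (D x) w) hφ hmax
    (by simpa [hw0] using ha) hρ

theorem not_ae_le_of_isLocalExtr_of_rankOneConvex {φ : EuclideanSpace ℝ (Fin n) → ℝ}
    {L : NNReal} {a ρ : ℝ}
    (hH : ∀ P, ContinuousAt (fun q : EuclideanSpace ℝ (Fin n) × Matrix (Fin N) (Fin n) ℝ =>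
      H q.1 q.2) (x, P))
    (hD : ContinuousAt D x) (hHx : ∀ t, RankOneConvex {P | H x P ≤ t})
    (hφ : LipschitzWith L φ) (hext : IsLocalMax φ x ∨ IsLocalMin φ x) (ha : a < H x (D x))
    (hρ : 0 < ρ) :
    ¬∀ᵐ y, y ∈ ball x ρ → H y (D y + Matrix.vecMulVec w (gradVec φ y)) ≤ a := by
  rcases hext with hmax | hmin
  · exact not_ae_le_of_isLocalMax_of_rankOneConvex hH hD hHx hφ hmax ha hρ
  · have := not_ae_le_of_isLocalMax_of_rankOneConvex (w := -w) hH hD hHx hφ.neg hmin.neg ha hρ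
    simpa only [gradVec_neg, Matrix.neg_vecMulVec, Matrix.vecMulVec_neg, neg_neg] using this

theorem isBoundedUnder_le_ae_restrict_ball {φ : EuclideanSpace ℝ (Fin n) → ℝ} {L : NNReal}
    {ρ : ℝ} (hH : ∀ y ∈ closure (ball x ρ), ∀ P,
      ContinuousAt (fun q : EuclideanSpace ℝ (Fin n) × Matrix (Fin N) (Fin n) ℝ => H q.1 q.2)
        (y, P))
    (hD : ∀ y ∈ closure (ball x ρ), ContinuousAt D y)
    (hφ : ∀ y ∈ ball x ρ, ‖gradVec φ y‖ ≤ L) :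
    IsBoundedUnder (· ≤ ·) (ae (volume.restrict (ball x ρ)))
      fun y => H y (D y + Matrix.vecMulVec w (gradVec φ y)) := by
  have hK : IsCompact (closure (ball x ρ) ×ˢ closedBall (0 : Fin n → ℝ) L) :=
    ((isCompact_closedBall x ρ).of_isClosed_subset isClosed_closure
      closure_ball_subset_closedBall).prod (isCompact_closedBall _ _)
  obtain ⟨M, hM⟩ := hK.bddAbove_image (f := fun q => H q.1 (D q.1 + Matrix.vecMulVec w q.2))
    fun q hq => (continuousAt_add_vecMulVec (hH _ hq.1 _) (hD _ hq.1)).continuousWithinAt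
  refine ⟨M, eventually_map.2 ?_⟩
  filter_upwards [ae_restrict_mem measurableSet_ball] with y hy
  exact hM ⟨(y, gradVec φ y), ⟨subset_closure hy, by simpa using hφ y hy⟩, rfl⟩

end Hamiltonian

theorem essSup_restrict_eq_of_eqOn {X : Type*} [TopologicalSpace X] [MeasurableSpace X]
    [OpensMeasurableSpace X] {μ : Measure X} [μ.IsOpenPosMeasure] {f : X → ℝ} {s : Set X}
    {c : ℝ} (hs : IsOpen s) (hne : s.Nonempty) (h : Set.EqOn f (fun _ => c) s) :
    essSup f (μ.restrict s) = c := by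
  rw [essSup_congr_ae (g := fun _ => c)
    ((ae_restrict_iff' hs.measurableSet).2 (ae_of_all _ fun _ hy => h hy)), essSup_const]
  exact mt Measure.restrict_eq_zero.1 (hs.measure_pos μ hne).ne'

theorem ContDiffOn.continuousOn_gradMat {n N : ℕ}
    {u : EuclideanSpace ℝ (Fin n) → EuclideanSpace ℝ (Fin N)} {Ω : Set (EuclideanSpace ℝ (Fin n))}
    (hu : ContDiffOn ℝ 1 u Ω) (hΩ : IsOpen Ω) : ContinuousOn (gradMat u) Ω :=
  continuousOn_pi.2 fun α => continuousOn_pi.2 fun _ =>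
    (EuclideanSpace.proj α).continuous.comp_continuousOn
      ((hu.continuousOn_fderiv_of_isOpen hΩ le_rfl).clm_apply continuousOn_const)

theorem stmt_14_general {n N : ℕ} (Ω : Set (EuclideanSpace ℝ (Fin n))) (hΩ : IsOpen Ω)
    (H : EuclideanSpace ℝ (Fin n) → Matrix (Fin N) (Fin n) ℝ → ℝ)
    (hHc : ContinuousOn (fun q : EuclideanSpace ℝ (Fin n) × Matrix (Fin N) (Fin n) ℝ =>
      H q.1 q.2) (Ω ×ˢ Set.univ))
    (hHrc : ∀ x ∈ Ω, ∀ t : ℝ, RankOneConvex {P | H x P ≤ t})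
    (u : EuclideanSpace ℝ (Fin n) → EuclideanSpace ℝ (Fin N))
    (hu : ContDiffOn ℝ 1 u Ω)
    (c : ℝ) (hHJ : ∀ x ∈ Ω, H x (gradMat u x) = c) :
    ∀ Ω' : Set (EuclideanSpace ℝ (Fin n)), IsOpen Ω' → closure Ω' ⊆ Ω →
      IsCompact (closure Ω') →
    ∀ φ : EuclideanSpace ℝ (Fin n) → ℝ, ∀ L : NNReal,
      LipschitzOnWith L φ (closure Ω') → (∀ y ∈ frontier Ω', φ y = 0) →
    ∀ ξ : EuclideanSpace ℝ (Fin N),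
    ∀ x ∈ Ω', (IsLocalMax φ x ∨ IsLocalMin φ x) →
    ∀ ρ : ℝ, 0 < ρ → closure (Metric.ball x ρ) ⊆ Ω' →
      essSup (fun y => H y (gradMat u y)) (volume.restrict Ω') ≤
      essSup (fun y => H y (gradMat u y + Matrix.of fun α i => ξ α * gradVec φ y i))
        (volume.restrict (Metric.ball x ρ)) := by
  intro Ω' hΩ' hΩ'Ω _ φ L hφ _ ξ x hx hext ρ hρ hBΩ'
  replace hΩ'Ω : Ω' ⊆ Ω := subset_closure.trans hΩ'Ω
  have hH : ∀ y ∈ Ω, ∀ P, ContinuousAt (fun q : _ × Matrix (Fin N) (Fin n) ℝ => H q.1 q.2) (y, P) :=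
    fun y hy P => hHc.continuousAt ((hΩ.prod isOpen_univ).mem_nhds ⟨hy, trivial⟩)
  have hDu : ∀ y ∈ Ω, ContinuousAt (gradMat u) y := fun y hy =>
    (hu.continuousOn_gradMat hΩ).continuousAt (hΩ.mem_nhds hy)
  obtain ⟨ψ, hψ, hφψ⟩ := hφ.extend_real
  have hφψ' : ∀ y ∈ Ω', φ =ᶠ[𝓝 y] ψ := fun y hy =>
    eventually_of_mem (hΩ'.mem_nhds hy) fun z hz => hφψ (subset_closure hz)
  have hgrad : ∀ y ∈ ball x ρ, gradVec φ y = gradVec ψ y := fun y hy =>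
    (hφψ' y (hBΩ' (subset_closure hy))).gradVec_eq
  rw [essSup_restrict_eq_of_eqOn hΩ' ⟨x, hx⟩ fun y hy => hHJ y (hΩ'Ω hy)]
  have hbdd := isBoundedUnder_le_ae_restrict_ball (w := ξ)
    (fun y hy => hH y (hΩ'Ω (hBΩ' hy))) (fun y hy => hDu y (hΩ'Ω (hBΩ' hy)))
    (fun y hy => hgrad y hy ▸ hψ.norm_gradVec_le y)
  by_contra! hlt
  rw [← hHJ x (hΩ'Ω hx)] at hlt
  refine not_ae_le_of_isLocalExtr_of_rankOneConvex (w := ξ) (hH x (hΩ'Ω hx)) (hDu x (hΩ'Ω hx))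
    (hHrc x (hΩ'Ω hx)) hψ (hext.imp (·.congr (hφψ' x hx)) (·.congr (hφψ' x hx))) hlt hρ ?_
  filter_upwards [(ae_restrict_iff' measurableSet_ball).1 (ae_le_essSup hbdd)] with y hy hyB
  rw [← hgrad y hyB]
  exact hy hyB

theorem stmt_14 {n N : ℕ} (Ω : Set (EuclideanSpace ℝ (Fin n))) (hΩ : IsOpen Ω)
    (H : EuclideanSpace ℝ (Fin n) → Matrix (Fin N) (Fin n) ℝ → ℝ)
    (hHnn : ∀ x ∈ Ω, ∀ P, 0 ≤ H x P)
    (hHc : ContinuousOn (fun q : EuclideanSpace ℝ (Fin n) × Matrix (Fin N) (Fin n) ℝ =>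
      H q.1 q.2) (Ω ×ˢ Set.univ))
    (hHrc : ∀ x ∈ Ω, ∀ t : ℝ, RankOneConvex {P | H x P ≤ t})
    (u : EuclideanSpace ℝ (Fin n) → EuclideanSpace ℝ (Fin N))
    (hu : ContDiffOn ℝ 1 u Ω)
    (c : ℝ) (hc : 0 ≤ c) (hHJ : ∀ x ∈ Ω, H x (gradMat u x) = c) :
    ∀ Ω' : Set (EuclideanSpace ℝ (Fin n)), IsOpen Ω' → closure Ω' ⊆ Ω →
      IsCompact (closure Ω') →
    ∀ φ : EuclideanSpace ℝ (Fin n) → ℝ, ∀ L : NNReal,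
      LipschitzOnWith L φ (closure Ω') → (∀ y ∈ frontier Ω', φ y = 0) →
    ∀ ξ : EuclideanSpace ℝ (Fin N),
    ∀ x ∈ Ω', (IsLocalMax φ x ∨ IsLocalMin φ x) →
    ∀ ρ : ℝ, 0 < ρ → closure (Metric.ball x ρ) ⊆ Ω' →
      essSup (fun y => H y (gradMat u y)) (volume.restrict Ω') ≤
      essSup (fun y => H y (gradMat u y + Matrix.of fun α i => ξ α * gradVec φ y i))
        (volume.restrict (Metric.ball x ρ)) :=
  stmt_14_general Ω hΩ H hHc hHrc u hu c hHJ
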